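/- arXiv:2011.07731 — 2 statements merged into one kernel-verified Lean document; each statement's English description precedes it below -/
import Mathlib

section
/- Every sublevel set of the generalised rational Chebyshev deviation function Φ(A,B) = max_{t∈[c,d]} |f(t) − A^T G(t)/(B^T H(t))| is convex on the domain where B^T H(t) > 0 for all t; i.e., Φ is quasiconvex on this domain. -/
open Matrix


lemma comb_pos {a b q1 q2 : ℝ} (ha : 0 ≤ a) (hb : 0 ≤ b) (hab : a + b = 1)
    (hq1 : 0 < q1) (hq2 : 0 < q2) : 0 < a * q1 + b * q2 := by
  rcases ha.eq_or_lt with h | h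
  · have hb1 : b = 1 := by linarith
    simp [← h, hb1, hq2]
  · nlinarith [mul_nonneg hb hq2.le, mul_pos h hq1]

-- key arithmetic lemma
lemma mediant_abs_le {fv p1 q1 p2 q2 a b r : ℝ} (hq1 : 0 < q1) (hq2 : 0 < q2)
    (ha : 0 ≤ a) (hb : 0 ≤ b) (hab : a + b = 1)
    (h1 : |fv - p1 / q1| ≤ r) (h2 : |fv - p2 / q2| ≤ r) :
    |fv - (a * p1 + b * p2) / (a * q1 + b * q2)| ≤ r := by
  have hQ : 0 < a * q1 + b * q2 := comb_pos ha hb hab hq1 hq2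
  have key : fv - (a * p1 + b * p2) / (a * q1 + b * q2)
      = (a * q1 * (fv - p1 / q1) + b * q2 * (fv - p2 / q2)) / (a * q1 + b * q2) := by
    field_simp
    ring
  rw [key, abs_div, abs_of_pos hQ, div_le_iff₀ hQ]
  have e1 : |a * q1 * (fv - p1 / q1)| ≤ a * q1 * r := by
    rw [abs_mul, abs_of_nonneg (mul_nonneg ha hq1.le)]
    exact mul_le_mul_of_nonneg_left h1 (mul_nonneg ha hq1.le)
  have e2 : |b * q2 * (fv - p2 / q2)| ≤ b * q2 * r := by
    rw [abs_mul, abs_of_nonneg (mul_nonneg hb hq2.le)]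
    exact mul_le_mul_of_nonneg_left h2 (mul_nonneg hb hq2.le)
  calc |a * q1 * (fv - p1 / q1) + b * q2 * (fv - p2 / q2)|
      ≤ |a * q1 * (fv - p1 / q1)| + |b * q2 * (fv - p2 / q2)| := abs_add_le _ _
    _ ≤ a * q1 * r + b * q2 * r := add_le_add e1 e2
    _ = r * (a * q1 + b * q2) := by ring

/-- The generalised rational Chebyshev deviation function
`Φ(A,B) = sup_{t ∈ [c,d]} |f t - A⬝G t / B⬝H t|` is quasiconvex on the convex
domain `D` where the denominator is positive for all `t ∈ [c,d]`. -/
theorem generalized_rational_deviation_quasiconvex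
    {n m : ℕ} (c d : ℝ) (hcd : c ≤ d)
    (f : ℝ → ℝ) (G : ℝ → (Fin (n + 1) → ℝ)) (H : ℝ → (Fin (m + 1) → ℝ))
    (hf : ContinuousOn f (Set.Icc c d))
    (hG : ContinuousOn G (Set.Icc c d)) (hH : ContinuousOn H (Set.Icc c d)) :
    Convex ℝ {AB : (Fin (n + 1) → ℝ) × (Fin (m + 1) → ℝ) |
        ∀ t ∈ Set.Icc c d, 0 < AB.2 ⬝ᵥ H t} ∧
    QuasiconvexOn ℝ
      {AB : (Fin (n + 1) → ℝ) × (Fin (m + 1) → ℝ) |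
        ∀ t ∈ Set.Icc c d, 0 < AB.2 ⬝ᵥ H t}
      (fun AB => ⨆ t : Set.Icc c d,
        |f t - (AB.1 ⬝ᵥ G t) / (AB.2 ⬝ᵥ H t)|) := by
  have hne : (Set.Icc c d).Nonempty := Set.nonempty_Icc.2 hcd
  haveI : Nonempty (Set.Icc c d) := hne.to_subtype
  set S := {AB : (Fin (n + 1) → ℝ) × (Fin (m + 1) → ℝ) |
      ∀ t ∈ Set.Icc c d, 0 < AB.2 ⬝ᵥ H t} with hSdef
  have hS : Convex ℝ S := by
    intro x hx y hy a b ha hb hab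
    intro t ht
    have h1 := hx t ht
    have h2 := hy t ht
    simp only [Prod.snd_add, Prod.smul_snd, add_dotProduct, smul_dotProduct, smul_eq_mul]
    exact comb_pos ha hb hab h1 h2
  refine ⟨hS, ?_⟩
  -- continuity of pointwise deviation for AB ∈ S
  have hbdd : ∀ AB ∈ S, BddAbove (Set.range fun t : Set.Icc c d =>
      |f t - (AB.1 ⬝ᵥ G t) / (AB.2 ⬝ᵥ H t)|) := by
    intro AB hAB
    have hGc : ContinuousOn (fun t => AB.1 ⬝ᵥ G t) (Set.Icc c d) := by
      simp only [dotProduct]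
      exact continuousOn_finset_sum _ fun i _ =>
        continuousOn_const.mul ((continuous_apply i).comp_continuousOn hG)
    have hHc : ContinuousOn (fun t => AB.2 ⬝ᵥ H t) (Set.Icc c d) := by
      simp only [dotProduct]
      exact continuousOn_finset_sum _ fun i _ =>
        continuousOn_const.mul ((continuous_apply i).comp_continuousOn hH)
    have hcont : ContinuousOn (fun t => |f t - (AB.1 ⬝ᵥ G t) / (AB.2 ⬝ᵥ H t)|)
        (Set.Icc c d) :=
      (hf.sub (hGc.div hHc (fun t ht => (hAB t ht).ne'))).abs
    have := (isCompact_Icc.image_of_continuousOn hcont).bddAbove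
    rwa [Set.image_eq_range] at this
  intro r
  intro x hx y hy a b ha hb hab
  refine ⟨hS hx.1 hy.1 ha hb hab, ?_⟩
  refine ciSup_le fun t => ?_
  have hx1 : |f t - (x.1 ⬝ᵥ G t) / (x.2 ⬝ᵥ H t)| ≤ r :=
    (le_ciSup (hbdd x hx.1) t).trans hx.2
  have hy1 : |f t - (y.1 ⬝ᵥ G t) / (y.2 ⬝ᵥ H t)| ≤ r :=
    (le_ciSup (hbdd y hy.1) t).trans hy.2
  have hq1 := hx.1 t t.2
  have hq2 := hy.1 t t.2
  simp only [Prod.fst_add, Prod.snd_add, Prod.smul_fst, Prod.smul_snd,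
    add_dotProduct, smul_dotProduct, smul_eq_mul]
  exact mediant_abs_le hq1 hq2 ha hb hab hx1 hy1
end

section
/- The function Φ(θ) = max_{t∈[c,d]} |f(t) − (a_0 + a_1 t + a_2·max{0, t − θ})| is quasiconvex in θ on [c,d], for any continuous f and fixed coefficients a_0, a_1, a_2. -/
private lemma between_abs {p q s : ℝ} (h1 : min p q ≤ s) (h2 : s ≤ max p q) :
    |s| ≤ max |p| |q| := by
  rcases le_total p q with h | h
  · rw [min_eq_left h] at h1; rw [max_eq_right h] at h2
    exact abs_le_max_abs_abs h1 h2
  · rw [min_eq_right h] at h1; rw [max_eq_left h] at h2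
    simpa [max_comm] using abs_le_max_abs_abs h1 h2

private lemma knot_between {t x y θ : ℝ} (h1 : min x y ≤ θ) (h2 : θ ≤ max x y) :
    min (max 0 (t - x)) (max 0 (t - y)) ≤ max 0 (t - θ) ∧
    max 0 (t - θ) ≤ max (max 0 (t - x)) (max 0 (t - y)) := by
  rcases le_total x y with h | h
  · rw [min_eq_left h] at h1; rw [max_eq_right h] at h2
    exact ⟨le_trans (min_le_right _ _) (max_le_max le_rfl (by linarith)),
      le_max_of_le_left (max_le_max le_rfl (by linarith))⟩
  · rw [min_eq_right h] at h1; rw [max_eq_left h] at h2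
    exact ⟨le_trans (min_le_left _ _) (max_le_max le_rfl (by linarith)),
      le_max_of_le_right (max_le_max le_rfl (by linarith))⟩

private lemma mul_between {a₂ u v w : ℝ} (h1 : min u v ≤ w) (h2 : w ≤ max u v) :
    min (a₂ * u) (a₂ * v) ≤ a₂ * w ∧ a₂ * w ≤ max (a₂ * u) (a₂ * v) := by
  rcases le_total u v with h | h
  · rw [min_eq_left h] at h1; rw [max_eq_right h] at h2
    rcases le_total 0 a₂ with ha | ha
    · exact ⟨min_le_of_left_le (mul_le_mul_of_nonneg_left h1 ha),
        le_max_of_le_right (mul_le_mul_of_nonneg_left h2 ha)⟩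
    · exact ⟨min_le_of_right_le (mul_le_mul_of_nonpos_left h2 ha),
        le_max_of_le_left (mul_le_mul_of_nonpos_left h1 ha)⟩
  · rw [min_eq_right h] at h1; rw [max_eq_left h] at h2
    rcases le_total 0 a₂ with ha | ha
    · exact ⟨min_le_of_right_le (mul_le_mul_of_nonneg_left h1 ha),
        le_max_of_le_left (mul_le_mul_of_nonneg_left h2 ha)⟩
    · exact ⟨min_le_of_left_le (mul_le_mul_of_nonpos_left h2 ha),
        le_max_of_le_right (mul_le_mul_of_nonpos_left h1 ha)⟩

/-- The free-knot deviation function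
`Φ θ = sup_{t ∈ [c,d]} |f t - (a₀ + a₁ t + a₂ max 0 (t - θ))|`
is quasiconvex in the knot `θ` on `[c,d]`, for continuous `f` and fixed
coefficients. -/
theorem free_knot_deviation_quasiconvex
    (c d : ℝ) (hcd : c ≤ d) (f : ℝ → ℝ) (hf : ContinuousOn f (Set.Icc c d))
    (a₀ a₁ a₂ : ℝ) :
    QuasiconvexOn ℝ (Set.Icc c d)
      (fun θ : ℝ => ⨆ t : Set.Icc c d,
        |f t - (a₀ + a₁ * t + a₂ * max 0 ((t : ℝ) - θ))|) := by
  have hne : Nonempty (Set.Icc c d) := ⟨⟨c, le_rfl, hcd⟩⟩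
  have hcont : ∀ θ : ℝ, Continuous (fun t : Set.Icc c d =>
      |f t - (a₀ + a₁ * t + a₂ * max 0 ((t : ℝ) - θ))|) := by
    intro θ
    have h1 : Continuous fun t : Set.Icc c d => f t := hf.restrict
    have h2 : Continuous fun t : Set.Icc c d =>
        a₀ + a₁ * (t : ℝ) + a₂ * max 0 ((t : ℝ) - θ) := by fun_prop
    exact (h1.sub h2).abs
  have hbdd : ∀ θ : ℝ, BddAbove (Set.range fun t : Set.Icc c d =>
      |f t - (a₀ + a₁ * t + a₂ * max 0 ((t : ℝ) - θ))|) := fun θ =>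
    (isCompact_range (hcont θ)).bddAbove
  intro r
  rintro x ⟨hx, hxr⟩ y ⟨hy, hyr⟩ a b ha hb hab
  set θ := a • x + b • y with hθ
  have hθmem : θ ∈ Set.Icc c d := (convex_Icc c d) hx hy ha hb hab
  refine ⟨hθmem, ?_⟩
  refine ciSup_le fun t => ?_
  have hxt : |f t - (a₀ + a₁ * t + a₂ * max 0 ((t : ℝ) - x))| ≤ r :=
    le_trans (le_ciSup (hbdd x) t) hxr
  have hyt : |f t - (a₀ + a₁ * t + a₂ * max 0 ((t : ℝ) - y))| ≤ r :=
    le_trans (le_ciSup (hbdd y) t) hyr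
  have hb' : b = 1 - a := by linarith
  subst hb'
  have ha1 : a ≤ 1 := by linarith
  have hθ1 : min x y ≤ θ := by
    rcases le_total x y with h | h
    · rw [min_eq_left h]; simp only [hθ, smul_eq_mul]
      nlinarith [mul_nonneg hb (sub_nonneg.mpr h)]
    · rw [min_eq_right h]; simp only [hθ, smul_eq_mul]
      nlinarith [mul_nonneg ha (sub_nonneg.mpr h)]
  have hθ2 : θ ≤ max x y := by
    rcases le_total x y with h | h
    · rw [max_eq_right h]; simp only [hθ, smul_eq_mul]
      nlinarith [mul_nonneg ha (sub_nonneg.mpr h)]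
    · rw [max_eq_left h]; simp only [hθ, smul_eq_mul]
      nlinarith [mul_nonneg hb (sub_nonneg.mpr h)]
  obtain ⟨hw1, hw2⟩ := knot_between (t := (t : ℝ)) hθ1 hθ2
  set u := max 0 ((t : ℝ) - x)
  set v := max 0 ((t : ℝ) - y)
  set w := max 0 ((t : ℝ) - θ)
  obtain ⟨hm1, hm2⟩ := mul_between (a₂ := a₂) hw1 hw2
  set C := f t - a₀ - a₁ * t with hC
  have key : |C - a₂ * w| ≤ max |C - a₂ * u| |C - a₂ * v| := by
    apply between_abs
    · rcases le_total (a₂ * u) (a₂ * v) with h | h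
      · rw [max_eq_right h] at hm2
        exact le_trans (min_le_right _ _) (by linarith)
      · rw [max_eq_left h] at hm2
        exact le_trans (min_le_left _ _) (by linarith)
    · rcases le_total (a₂ * u) (a₂ * v) with h | h
      · rw [min_eq_left h] at hm1
        exact le_trans (by linarith : C - a₂ * w ≤ C - a₂ * u) (le_max_left _ _)
      · rw [min_eq_right h] at hm1
        exact le_trans (by linarith : C - a₂ * w ≤ C - a₂ * v) (le_max_right _ _)
  have e : ∀ z : ℝ, f t - (a₀ + a₁ * (t : ℝ) + z) = C - z := by
    intro z; rw [hC]; ring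
  calc |f t - (a₀ + a₁ * t + a₂ * w)| = |C - a₂ * w| := by rw [e]
    _ ≤ max |C - a₂ * u| |C - a₂ * v| := key
    _ ≤ r := max_le (e (a₂ * u) ▸ hxt) (e (a₂ * v) ▸ hyt)
end
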